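/- arXiv:1806.03907 — 2 statements merged into one kernel-verified Lean document; each statement's English description precedes it below -/
import Mathlib

section
/- If a PPS x = P(x) has greatest fixed point g* in [0,1]^n with g* < 1 in every coordinate, or least fixed point q* in [0,1]^n with q* > 0 in every coordinate, then x = P(x) is an LDF-PPS. -/
open Filter Topology

/-- A probabilistic polynomial in `n` variables: `∑ r, p r * x ^ expo r`,
with nonnegative coefficients summing to at most 1. -/
structure ProbPoly (n : ℕ) where
  numTerms : ℕ
  p : Fin numTerms → ℝ
  expo : Fin numTerms → Fin n → ℕ
  p_nonneg : ∀ r, 0 ≤ p r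
  p_sum_le_one : ∑ r, p r ≤ 1

/-- Evaluation of a probabilistic polynomial. -/
def ProbPoly.eval {n : ℕ} (P : ProbPoly n) (x : Fin n → ℝ) : ℝ :=
  ∑ r, P.p r * ∏ i, x i ^ P.expo r i

/-- The unit box `[0,1]^n`. -/
def box01 (n : ℕ) : Set (Fin n → ℝ) := {x | ∀ i, 0 ≤ x i ∧ x i ≤ 1}

/-- The minimax value of the zero-sum matrix game with payoff matrix `B`:
`Val(B) = max_{s ∈ Δ_k} min_{t ∈ Δ_m} sᵀ B t`. -/
noncomputable def gameVal {k m : ℕ} (B : Matrix (Fin k) (Fin m) ℝ) : ℝ :=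
  ⨆ s : stdSimplex ℝ (Fin k), ⨅ t : stdSimplex ℝ (Fin m),
    ∑ i : Fin k, ∑ j : Fin m, s.1 i * B i j * t.1 j

/-- A probability distribution on `Fin k`. -/
def IsDist {k : ℕ} (d : Fin k → ℝ) : Prop := (∀ j, 0 ≤ d j) ∧ ∑ j, d j = 1

/-- `g` is the greatest fixed point of `F` in `[0,1]^n`. -/
def IsGFP {n : ℕ} (F : (Fin n → ℝ) → Fin n → ℝ) (g : Fin n → ℝ) : Prop :=
  g ∈ box01 n ∧ F g = g ∧ ∀ g' ∈ box01 n, F g' = g' → g' ≤ g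

/-- `q` is the least fixed point of `F` in `[0,1]^n`. -/
def IsLFP {n : ℕ} (F : (Fin n → ℝ) → Fin n → ℝ) (q : Fin n → ℝ) : Prop :=
  q ∈ box01 n ∧ F q = q ∧ ∀ q' ∈ box01 n, F q' = q' → q ≤ q'

/-- A minimax probabilistic polynomial system (minimax-PPS) in `n` variables:
for each `i`, an `nr i × nc i` matrix of probabilistic polynomials. -/
structure MinimaxPPS (n : ℕ) where
  nr : Fin n → ℕ
  nc : Fin n → ℕ
  nr_pos : ∀ i, 0 < nr i
  nc_pos : ∀ i, 0 < nc i
  q : (i : Fin n) → Fin (nr i) → Fin (nc i) → ProbPoly n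

namespace MinimaxPPS

/-- The payoff matrix `A_i(x)`. -/
noncomputable def A {n : ℕ} (P : MinimaxPPS n) (i : Fin n) (x : Fin n → ℝ) :
    Matrix (Fin (P.nr i)) (Fin (P.nc i)) ℝ :=
  Matrix.of fun j k => (P.q i j k).eval x

/-- `P(x)`: coordinatewise the value of the matrix game `A_i(x)`. -/
noncomputable def eval {n : ℕ} (P : MinimaxPPS n) (x : Fin n → ℝ) : Fin n → ℝ :=
  fun i => gameVal (P.A i x)

/-- The minPPS `P_{σ,*}` obtained by fixing a mixed policy `σ` for the max player. -/
noncomputable def fixMax {n : ℕ} (P : MinimaxPPS n)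
    (σ : (i : Fin n) → Fin (P.nr i) → ℝ) (x : Fin n → ℝ) : Fin n → ℝ :=
  fun i => ⨅ k : Fin (P.nc i), ∑ j, σ i j * (P.q i j k).eval x

/-- The maxPPS `P_{*,τ}` obtained by fixing a mixed policy `τ` for the min player. -/
noncomputable def fixMin {n : ℕ} (P : MinimaxPPS n)
    (τ : (i : Fin n) → Fin (P.nc i) → ℝ) (x : Fin n → ℝ) : Fin n → ℝ :=
  fun i => ⨆ j : Fin (P.nr i), ∑ k, τ i k * (P.q i j k).eval x

/-- The PPS `P_{σ,τ}` obtained by fixing both policies. -/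
def fixBoth {n : ℕ} (P : MinimaxPPS n)
    (σ : (i : Fin n) → Fin (P.nr i) → ℝ) (τ : (i : Fin n) → Fin (P.nc i) → ℝ)
    (x : Fin n → ℝ) : Fin n → ℝ :=
  fun i => ∑ j, ∑ k, σ i j * τ i k * (P.q i j k).eval x

end MinimaxPPS

/-- A PPS: each coordinate is a probabilistic polynomial. -/
structure PPS (n : ℕ) where
  poly : Fin n → ProbPoly n

namespace PPS

def eval {n : ℕ} (P : PPS n) (x : Fin n → ℝ) : Fin n → ℝ := fun i => (P.poly i).eval x

/-- Edge of the dependency graph: `x_j` appears (with a nonzero coefficient) in `P_i(x)`. -/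
def depends {n : ℕ} (P : PPS n) (i j : Fin n) : Prop :=
  ∃ r, (P.poly i).p r ≠ 0 ∧ (P.poly i).expo r j ≠ 0

end PPS

/-- A probabilistic polynomial is linear degenerate: every term with nonzero coefficient
has total degree exactly 1 (so it is linear with no constant term), and the
coefficients sum to exactly 1. -/
def IsLDPoly {n : ℕ} (Q : ProbPoly n) : Prop :=
  (∀ r, Q.p r ≠ 0 → ∑ j, Q.expo r j = 1) ∧ ∑ r, Q.p r = 1

/-- There exists a bottom strongly connected component of the dependency relation `dep`
all of whose members satisfy `ld`. -/
def IsLDBottom {n : ℕ} (dep : Fin n → Fin n → Prop) (ld : Fin n → Prop) : Prop :=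
  ∃ S : Set (Fin n), S.Nonempty ∧
    (∀ i ∈ S, ∀ j ∈ S, Relation.ReflTransGen dep i j) ∧
    (∀ i ∈ S, ∀ j, dep i j → j ∈ S) ∧
    (∀ i ∈ S, ld i)

/-- A PPS is linear degenerate free (LDF): no bottom strongly connected component of its
dependency graph induces an LD subsystem. -/
def PPS.IsLDF {n : ℕ} (P : PPS n) : Prop :=
  ¬ IsLDBottom P.depends (fun i => IsLDPoly (P.poly i))

namespace MinimaxPPS

/-- Dependency relation of the PPS `P_{σ,τ}`. -/
def dependsMix {n : ℕ} (P : MinimaxPPS n) (σ : (i : Fin n) → Fin (P.nr i) → ℝ)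
    (τ : (i : Fin n) → Fin (P.nc i) → ℝ) (i j : Fin n) : Prop :=
  ∃ a b r, σ i a ≠ 0 ∧ τ i b ≠ 0 ∧ (P.q i a b).p r ≠ 0 ∧ (P.q i a b).expo r j ≠ 0

/-- Coordinate `i` of the PPS `P_{σ,τ}` is linear degenerate. -/
def IsLDMixAt {n : ℕ} (P : MinimaxPPS n) (σ : (i : Fin n) → Fin (P.nr i) → ℝ)
    (τ : (i : Fin n) → Fin (P.nc i) → ℝ) (i : Fin n) : Prop :=
  (∀ a b r, σ i a ≠ 0 → τ i b ≠ 0 → (P.q i a b).p r ≠ 0 → ∑ j, (P.q i a b).expo r j = 1) ∧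
  (∑ a, ∑ b, σ i a * τ i b * ∑ r, (P.q i a b).p r) = 1

/-- A mixed min-player policy `τ` is LDF if for every mixed max-player policy `σ`
the PPS `P_{σ,τ}` is an LDF-PPS. -/
def IsLDFPolicy {n : ℕ} (P : MinimaxPPS n) (τ : (i : Fin n) → Fin (P.nc i) → ℝ) : Prop :=
  ∀ σ : (i : Fin n) → Fin (P.nr i) → ℝ, (∀ i, IsDist (σ i)) →
    ¬ IsLDBottom (P.dependsMix σ τ) (P.IsLDMixAt σ τ)

end MinimaxPPS

/-- The three forms of equations in an SNF minimax-PPS. -/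
inductive SNFForm | L | Q | M
  deriving DecidableEq

/-- A minimax-PPS in simple normal form (SNF): each coordinate is of form L
(linear, `a0 i + ∑ j, a i j * x j`), form Q (`x (quadL i) * x (quadR i)`), or
form M (the value of a matrix game each of whose entries is a variable or the
constant 1, encoded by `Option (Fin n)` with `none` standing for `1`). -/
structure SNFPPS (n : ℕ) where
  form : Fin n → SNFForm
  a0 : Fin n → ℝ
  a : Fin n → Fin n → ℝ
  quadL : Fin n → Fin n
  quadR : Fin n → Fin n
  nr : Fin n → ℕ
  nc : Fin n → ℕ
  nr_pos : ∀ i, 0 < nr i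
  nc_pos : ∀ i, 0 < nc i
  entry : (i : Fin n) → Fin (nr i) → Fin (nc i) → Option (Fin n)
  a0_nonneg : ∀ i, 0 ≤ a0 i
  a_nonneg : ∀ i j, 0 ≤ a i j
  a_sum_le_one : ∀ i, a0 i + ∑ j, a i j ≤ 1

namespace SNFPPS

noncomputable def eval {n : ℕ} (P : SNFPPS n) (x : Fin n → ℝ) : Fin n → ℝ := fun i =>
  match P.form i with
  | SNFForm.L => P.a0 i + ∑ j, P.a i j * x j
  | SNFForm.Q => x (P.quadL i) * x (P.quadR i)
  | SNFForm.M => gameVal (Matrix.of fun j k => (P.entry i j k).elim 1 x)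

/-- The maxPPS `P_{*,τ}` obtained by fixing a mixed policy `τ` for the min player. -/
noncomputable def fixMin {n : ℕ} (P : SNFPPS n)
    (τ : (i : Fin n) → Fin (P.nc i) → ℝ) (x : Fin n → ℝ) : Fin n → ℝ := fun i =>
  match P.form i with
  | SNFForm.L => P.a0 i + ∑ j, P.a i j * x j
  | SNFForm.Q => x (P.quadL i) * x (P.quadR i)
  | SNFForm.M => ⨆ j : Fin (P.nr i), ∑ k, τ i k * (P.entry i j k).elim 1 x

/-- The minPPS `P_{σ,*}` obtained by fixing a mixed policy `σ` for the max player. -/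
noncomputable def fixMax {n : ℕ} (P : SNFPPS n)
    (σ : (i : Fin n) → Fin (P.nr i) → ℝ) (x : Fin n → ℝ) : Fin n → ℝ := fun i =>
  match P.form i with
  | SNFForm.L => P.a0 i + ∑ j, P.a i j * x j
  | SNFForm.Q => x (P.quadL i) * x (P.quadR i)
  | SNFForm.M => ⨅ k : Fin (P.nc i), ∑ j, σ i j * (P.entry i j k).elim 1 x

/-- `S` is closed under the rules defining the least closure set: it contains every
deficient form-L variable, and is closed under rules (a) and (b). -/
def Closed {n : ℕ} (P : SNFPPS n) (S : Set (Fin n)) : Prop :=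
  (∀ i, P.form i = SNFForm.L → P.a0 i + ∑ j, P.a i j < 1 → i ∈ S) ∧
  (∀ i, P.form i = SNFForm.L → (∃ j ∈ S, P.a i j ≠ 0) → i ∈ S) ∧
  (∀ i, P.form i = SNFForm.Q → (P.quadL i ∈ S ∨ P.quadR i ∈ S) → i ∈ S) ∧
  (∀ i, P.form i = SNFForm.M →
    (∀ r : Fin (P.nr i), ∃ c : Fin (P.nc i), ∃ v ∈ S, P.entry i r c = some v) → i ∈ S)

/-- The least closure set `S`. -/
def leastClosure {n : ℕ} (P : SNFPPS n) : Set (Fin n) := ⋂₀ {S | P.Closed S}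

end SNFPPS

/-- Labels for the three sets in the limit-sure construction: `s` (the set `S ∪ {1}`),
`f` (the set `F`), and `o` (the remaining set `O`). -/
inductive Lab | s | f | o
  deriving DecidableEq

/-!
A bottom strongly connected component `S` whose equations are linear degenerate is closed
under dependencies, and each of its equations is a convex combination of variables of `S`.
So overwriting `g*` by `1` on `S` gives a post-fixed point of `P` in `[0,1]^n`, and overwriting
`q*` by `0` on `S` a pre-fixed point. By Knaster–Tarski the former lies below `g*` and the
latter above `q*`, contradicting `g* < 1`, resp. `q* > 0`, on `S`.
-/

namespace ProbPoly

variable {n : ℕ} (Q : ProbPoly n) {x y : Fin n → ℝ}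

lemma eval_nonneg (hx : 0 ≤ x) : 0 ≤ Q.eval x :=
  Finset.sum_nonneg fun r _ => mul_nonneg (Q.p_nonneg r)
    (Finset.prod_nonneg fun i _ => pow_nonneg (hx i) _)

lemma eval_le_one (hx : x ∈ box01 n) : Q.eval x ≤ 1 := by
  refine le_trans (Finset.sum_le_sum fun r _ => ?_) Q.p_sum_le_one
  exact mul_le_of_le_one_right (Q.p_nonneg r) <|
    Finset.prod_le_one (fun i _ => pow_nonneg (hx i).1 _)
      (fun i _ => pow_le_one₀ (hx i).1 (hx i).2)

lemma eval_mono (hx : 0 ≤ x) (hxy : x ≤ y) : Q.eval x ≤ Q.eval y :=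
  Finset.sum_le_sum fun r _ => mul_le_mul_of_nonneg_left
    (Finset.prod_le_prod (fun i _ => pow_nonneg (hx i) _)
      (fun i _ => pow_le_pow_left₀ (hx i) (hxy i) _)) (Q.p_nonneg r)

lemma eval_eq_one (hQ : ∑ r, Q.p r = 1)
    (hx : ∀ r j, Q.p r ≠ 0 → Q.expo r j ≠ 0 → x j = 1) : Q.eval x = 1 := by
  rw [← hQ, eval]
  refine Finset.sum_congr rfl fun r _ => ?_
  by_cases hr : Q.p r = 0
  · simp [hr]
  · rw [Finset.prod_eq_one fun j _ => ?_, mul_one]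
    by_cases hj : Q.expo r j = 0
    · simp [hj]
    · simp [hx r j hr hj]

lemma eval_eq_zero (hQ : ∀ r, Q.p r ≠ 0 → ∃ j, Q.expo r j ≠ 0)
    (hx : ∀ r j, Q.p r ≠ 0 → Q.expo r j ≠ 0 → x j = 0) : Q.eval x = 0 := by
  refine Finset.sum_eq_zero fun r _ => ?_
  by_cases hr : Q.p r = 0
  · simp [hr]
  · obtain ⟨j, hj⟩ := hQ r hr
    rw [Finset.prod_eq_zero (Finset.mem_univ j) (by simp [hx r j hr hj, hj]), mul_zero]

end ProbPoly

lemma IsLDPoly.exists_expo_ne_zero {n : ℕ} {Q : ProbPoly n} (hQ : IsLDPoly Q)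
    {r : Fin Q.numTerms} (hr : Q.p r ≠ 0) : ∃ j, Q.expo r j ≠ 0 := by
  by_contra! h
  simpa [h] using hQ.1 r hr

lemma mem_box01_iff {n : ℕ} {x : Fin n → ℝ} : x ∈ box01 n ↔ x ∈ Set.Icc 0 1 := by
  simp only [box01, Set.mem_ofPred_eq, Set.mem_Icc, Pi.le_def, Pi.zero_apply, Pi.one_apply,
    forall_and]

lemma zero_mem_box01 (n : ℕ) : (0 : Fin n → ℝ) ∈ box01 n := fun _ => by simp

lemma one_mem_box01 (n : ℕ) : (1 : Fin n → ℝ) ∈ box01 n := fun _ => by simp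

lemma Set.piecewise_mem_box01 {n : ℕ} {x y : Fin n → ℝ} (S : Set (Fin n))
    [DecidablePred (· ∈ S)] (hx : x ∈ box01 n) (hy : y ∈ box01 n) : S.piecewise x y ∈ box01 n :=
  fun i => by by_cases hi : i ∈ S <;> simp [hi, hx i, hy i]

section Tarski

variable {n : ℕ} {F : (Fin n → ℝ) → Fin n → ℝ}

instance : Fact ((0 : Fin n → ℝ) ≤ 1) := ⟨zero_le_one⟩

def boxOrderHom (hmono : MonotoneOn F (box01 n)) (hmaps : Set.MapsTo F (box01 n) (box01 n)) :
    Set.Icc (0 : Fin n → ℝ) 1 →o Set.Icc (0 : Fin n → ℝ) 1 where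
  toFun x := ⟨F x, mem_box01_iff.1 (hmaps (mem_box01_iff.2 x.2))⟩
  monotone' x y hxy := hmono (mem_box01_iff.2 x.2) (mem_box01_iff.2 y.2) hxy

variable (hmono : MonotoneOn F (box01 n)) (hmaps : Set.MapsTo F (box01 n) (box01 n))
include hmono hmaps

lemma IsGFP.le_of_le_map {g x : Fin n → ℝ} (hg : IsGFP F g) (hx : x ∈ box01 n) (hxF : x ≤ F x) :
    x ≤ g :=
  let f := boxOrderHom hmono hmaps
  have hfix : F f.gfp = f.gfp := congrArg Subtype.val f.isFixedPt_gfp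
  (Subtype.coe_le_coe.2 (f.le_gfp (a := ⟨x, mem_box01_iff.1 hx⟩) hxF)).trans
    (hg.2.2 _ (mem_box01_iff.2 f.gfp.2) hfix)

lemma IsLFP.le_of_map_le {q x : Fin n → ℝ} (hq : IsLFP F q) (hx : x ∈ box01 n) (hxF : F x ≤ x) :
    q ≤ x :=
  let f := boxOrderHom hmono hmaps
  have hfix : F f.lfp = f.lfp := congrArg Subtype.val f.isFixedPt_lfp
  (hq.2.2 _ (mem_box01_iff.2 f.lfp.2) hfix).trans
    (Subtype.coe_le_coe.2 (f.lfp_le (a := ⟨x, mem_box01_iff.1 hx⟩) hxF))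

end Tarski

namespace PPS

variable {n : ℕ} (P : PPS n)

lemma mapsTo_eval : Set.MapsTo P.eval (box01 n) (box01 n) := fun _ hx i =>
  ⟨(P.poly i).eval_nonneg fun j => (hx j).1, (P.poly i).eval_le_one hx⟩

lemma monotoneOn_eval : MonotoneOn P.eval (box01 n) := fun _ hx _ _ hxy i =>
  (P.poly i).eval_mono (fun j => (hx j).1) hxy

variable {P} {S : Set (Fin n)} [DecidablePred (· ∈ S)] {x : Fin n → ℝ}

lemma le_eval_piecewise_one (hS : ∀ i ∈ S, ∀ j, P.depends i j → j ∈ S)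
    (hsum : ∀ i ∈ S, ∑ r, (P.poly i).p r = 1) (hx : x ∈ box01 n) (hxF : x ≤ P.eval x) :
    S.piecewise 1 x ≤ P.eval (S.piecewise 1 x) := by
  intro i
  by_cases hi : i ∈ S
  · rw [S.piecewise_eq_of_mem _ _ hi]
    exact ((P.poly i).eval_eq_one (hsum i hi) fun r j hr hj =>
      S.piecewise_eq_of_mem _ _ (hS i hi j ⟨r, hr, hj⟩)).ge
  · have hle : x ≤ S.piecewise 1 x := fun j => by
      by_cases hj : j ∈ S <;> simp [hj, (hx j).2]
    rw [S.piecewise_eq_of_notMem _ _ hi]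
    exact (hxF i).trans
      (P.monotoneOn_eval hx (S.piecewise_mem_box01 (one_mem_box01 n) hx) hle i)

lemma eval_piecewise_zero_le (hS : ∀ i ∈ S, ∀ j, P.depends i j → j ∈ S)
    (hld : ∀ i ∈ S, IsLDPoly (P.poly i)) (hx : x ∈ box01 n) (hxF : P.eval x ≤ x) :
    P.eval (S.piecewise 0 x) ≤ S.piecewise 0 x := by
  intro i
  by_cases hi : i ∈ S
  · rw [S.piecewise_eq_of_mem _ _ hi]
    exact ((P.poly i).eval_eq_zero (fun _ => (hld i hi).exists_expo_ne_zero) fun r j hr hj =>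
      S.piecewise_eq_of_mem _ _ (hS i hi j ⟨r, hr, hj⟩)).le
  · have hle : S.piecewise 0 x ≤ x := fun j => by
      by_cases hj : j ∈ S <;> simp [hj, (hx j).1]
    rw [S.piecewise_eq_of_notMem _ _ hi]
    exact (P.monotoneOn_eval (S.piecewise_mem_box01 (zero_mem_box01 n) hx) hx hle i).trans
      (hxF i)

end PPS

/-- If a PPS has greatest fixed point `g* < 1` in every coordinate, or
least fixed point `q* > 0` in every coordinate, then it is an LDF-PPS. -/
theorem pps_LDF_of_GFP_lt_one_or_LFP_pos {n : ℕ} (P : PPS n)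
    (h : (∃ g, IsGFP P.eval g ∧ ∀ i, g i < 1) ∨
         (∃ q, IsLFP P.eval q ∧ ∀ i, 0 < q i)) :
    P.IsLDF := by
  classical
  rintro ⟨S, ⟨i, hi⟩, -, hS, hld⟩
  rcases h with ⟨g, hg, hg_lt⟩ | ⟨q, hq, hq_pos⟩
  · have hle := hg.le_of_le_map P.monotoneOn_eval P.mapsTo_eval
      (S.piecewise_mem_box01 (one_mem_box01 n) hg.1)
      (P.le_eval_piecewise_one hS (fun j hj => (hld j hj).2) hg.1 hg.2.1.ge) i
    simp only [S.piecewise_eq_of_mem _ _ hi, Pi.one_apply] at hle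
    exact (hg_lt i).not_ge hle
  · have hle := hq.le_of_map_le P.monotoneOn_eval P.mapsTo_eval
      (S.piecewise_mem_box01 (zero_mem_box01 n) hq.1)
      (P.eval_piecewise_zero_le hS hld hq.1 hq.2.1.le) i
    simp only [S.piecewise_eq_of_mem _ _ hi, Pi.zero_apply] at hle
    exact (hq_pos i).not_ge hle
end

section
/- Let x = P(x) be a minimax-PPS whose greatest fixed point g* ∈ [0,1]^n satisfies g* < 1 in every coordinate. Then there exists a (mixed) LDF policy τ for the min player such that g*_{*,τ} < 1 in every coordinate. -/
open Filter Topology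

section Helpers

open Finset

variable {n : ℕ}

lemma probPoly_eval_nonneg (Q : ProbPoly n) {x : Fin n → ℝ} (hx : ∀ i, 0 ≤ x i) :
    0 ≤ Q.eval x :=
  Finset.sum_nonneg fun r _ => mul_nonneg (Q.p_nonneg r)
    (Finset.prod_nonneg fun i _ => pow_nonneg (hx i) _)

lemma probPoly_prod_le_one (Q : ProbPoly n) {x : Fin n → ℝ} (hx : x ∈ box01 n)
    (r : Fin Q.numTerms) : ∏ i, x i ^ Q.expo r i ≤ 1 :=
  Finset.prod_le_one (fun i _ => pow_nonneg (hx i).1 _)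
    (fun i _ => pow_le_one₀ (hx i).1 (hx i).2)

lemma probPoly_eval_le_one (Q : ProbPoly n) {x : Fin n → ℝ} (hx : x ∈ box01 n) :
    Q.eval x ≤ 1 := by
  refine le_trans (Finset.sum_le_sum fun r _ => ?_) Q.p_sum_le_one
  exact mul_le_of_le_one_right (Q.p_nonneg r) (probPoly_prod_le_one Q hx r)

lemma probPoly_eval_mono (Q : ProbPoly n) {x y : Fin n → ℝ} (hx : ∀ i, 0 ≤ x i)
    (hxy : x ≤ y) : Q.eval x ≤ Q.eval y := by
  refine Finset.sum_le_sum fun r _ => mul_le_mul_of_nonneg_left ?_ (Q.p_nonneg r)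
  exact Finset.prod_le_prod (fun i _ => pow_nonneg (hx i) _)
    (fun i _ => pow_le_pow_left₀ (hx i) (hxy i) _)

lemma probPoly_eval_eq_one (Q : ProbPoly n) {x : Fin n → ℝ}
    (hmass : ∑ r, Q.p r = 1)
    (hvar : ∀ r, Q.p r ≠ 0 → ∀ j, Q.expo r j ≠ 0 → x j = 1) : Q.eval x = 1 := by
  rw [ProbPoly.eval, ← hmass]
  refine Finset.sum_congr rfl fun r _ => ?_
  by_cases hp : Q.p r = 0
  · simp [hp]
  · have : ∏ i, x i ^ Q.expo r i = 1 := by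
      refine Finset.prod_eq_one fun i _ => ?_
      by_cases he : Q.expo r i = 0
      · simp [he]
      · rw [hvar r hp i he, one_pow]
    rw [this, mul_one]

lemma probPoly_eval_eq_one_inv (Q : ProbPoly n) {x : Fin n → ℝ} (hx : x ∈ box01 n)
    (h1 : Q.eval x = 1) :
    (∑ r, Q.p r = 1) ∧ ∀ r, Q.p r ≠ 0 → ∀ j, Q.expo r j ≠ 0 → x j = 1 := by
  have hterm : ∀ r ∈ Finset.univ, Q.p r * ∏ i, x i ^ Q.expo r i ≤ Q.p r := fun r _ =>
    mul_le_of_le_one_right (Q.p_nonneg r) (probPoly_prod_le_one Q hx r)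
  have hsum_le : Q.eval x ≤ ∑ r, Q.p r := Finset.sum_le_sum hterm
  have hmass : ∑ r, Q.p r = 1 := le_antisymm Q.p_sum_le_one (h1 ▸ hsum_le)
  have heq : ∀ r ∈ Finset.univ, Q.p r * ∏ i, x i ^ Q.expo r i = Q.p r :=
    (Finset.sum_eq_sum_iff_of_le hterm).1 (by rw [← ProbPoly.eval, h1, hmass])
  refine ⟨hmass, fun r hp j he => ?_⟩
  have hprod : ∏ i, x i ^ Q.expo r i = 1 := by
    have := heq r (Finset.mem_univ r)
    field_simp [hp] at this
    linarith [this]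
  have hfac_le : ∀ i, x i ^ Q.expo r i ≤ 1 := fun i => pow_le_one₀ (hx i).1 (hx i).2
  have hfac_ge : (1:ℝ) ≤ x j ^ Q.expo r j := by
    have h2 : ∏ i, x i ^ Q.expo r i = x j ^ Q.expo r j * ∏ i ∈ Finset.univ.erase j, x i ^ Q.expo r i :=
      (Finset.mul_prod_erase Finset.univ _ (Finset.mem_univ j)).symm
    have h3 : ∏ i ∈ Finset.univ.erase j, x i ^ Q.expo r i ≤ 1 :=
      Finset.prod_le_one (fun i _ => pow_nonneg (hx i).1 _) (fun i _ => hfac_le i)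
    have h4 : (0:ℝ) ≤ x j ^ Q.expo r j := pow_nonneg (hx j).1 _
    nlinarith [hprod, h2, h3, h4]
  have hle : x j ^ Q.expo r j ≤ x j :=
    pow_le_of_le_one (hx j).1 (hx j).2 he
  exact le_antisymm (hx j).2 (le_trans hfac_ge hle)

/-- Equality case for a convex-combination sum bounded by 1. -/
lemma dist_sum_eq_one {m : ℕ} (τv : Fin m → ℝ) (f : Fin m → ℝ)
    (hτ0 : ∀ b, 0 ≤ τv b) (hf : ∀ b, f b ≤ 1) (hτ1 : ∑ b, τv b = 1)
    (h : ∑ b, τv b * f b = 1) : ∀ b, τv b ≠ 0 → f b = 1 := by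
  have hterm : ∀ b ∈ Finset.univ, τv b * f b ≤ τv b * 1 := fun b _ =>
    mul_le_mul_of_nonneg_left (hf b) (hτ0 b)
  have heq : ∀ b ∈ Finset.univ, τv b * f b = τv b * 1 :=
    (Finset.sum_eq_sum_iff_of_le hterm).1 (by simp [h, hτ1])
  intro b hb
  have := heq b (Finset.mem_univ b)
  exact mul_left_cancel₀ hb this

/-- Equality case for a double convex-combination sum bounded by 1. -/
lemma dist_double_sum_eq_one {k m : ℕ} (σv : Fin k → ℝ) (τv : Fin m → ℝ)
    (M : Fin k → Fin m → ℝ) (hσ0 : ∀ a, 0 ≤ σv a) (hτ0 : ∀ b, 0 ≤ τv b)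
    (hM : ∀ a b, M a b ≤ 1)
    (hσ1 : ∑ a, σv a = 1) (hτ1 : ∑ b, τv b = 1)
    (h : ∑ a, ∑ b, σv a * τv b * M a b = 1) :
    ∀ a b, σv a ≠ 0 → τv b ≠ 0 → M a b = 1 := by
  have hkey : ∀ a, σv a ≠ 0 → (∑ b, τv b * M a b) = 1 := by
    have hin : ∀ a, ∑ b, σv a * τv b * M a b = σv a * ∑ b, τv b * M a b := by
      intro a; rw [Finset.mul_sum]; exact Finset.sum_congr rfl fun b _ => by ring
    have hf : ∀ a, (∑ b, τv b * M a b) ≤ 1 := by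
      intro a
      calc ∑ b, τv b * M a b ≤ ∑ b, τv b * 1 :=
            Finset.sum_le_sum fun b _ => mul_le_mul_of_nonneg_left (hM a b) (hτ0 b)
        _ = 1 := by simp [hτ1]
    have h' : ∑ a, σv a * (∑ b, τv b * M a b) = 1 := by
      rw [← h]; exact Finset.sum_congr rfl fun a _ => (hin a).symm
    exact dist_sum_eq_one σv (fun a => ∑ b, τv b * M a b) hσ0 hf hσ1 h'
  intro a b ha hb
  exact dist_sum_eq_one τv (M a) hτ0 (hM a) hτ1 (hkey a ha) b hb

section GameVal

variable {k m : ℕ} (B B' : Matrix (Fin k) (Fin m) ℝ)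

private lemma pay_nonneg {s : Fin k → ℝ} {t : Fin m → ℝ}
    (hB0 : ∀ i j, 0 ≤ B i j) (hs : ∀ i, 0 ≤ s i) (ht : ∀ j, 0 ≤ t j) :
    0 ≤ ∑ i, ∑ j, s i * B i j * t j :=
  Finset.sum_nonneg fun i _ => Finset.sum_nonneg fun j _ =>
    mul_nonneg (mul_nonneg (hs i) (hB0 i j)) (ht j)

private lemma pay_le_one {s : Fin k → ℝ} {t : Fin m → ℝ}
    (hB1 : ∀ i j, B i j ≤ 1) (hs : s ∈ stdSimplex ℝ (Fin k))
    (ht : t ∈ stdSimplex ℝ (Fin m)) :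
    ∑ i, ∑ j, s i * B i j * t j ≤ 1 := by
  have h1 : ∑ i, ∑ j, s i * B i j * t j ≤ ∑ i, ∑ j, s i * t j := by
    refine Finset.sum_le_sum fun i _ => Finset.sum_le_sum fun j _ => ?_
    have : s i * B i j ≤ s i * 1 := mul_le_mul_of_nonneg_left (hB1 i j) (hs.1 i)
    have := mul_le_mul_of_nonneg_right this (ht.1 j)
    linarith
  have h2 : ∑ i, ∑ j, s i * t j = 1 := by
    rw [← Finset.sum_mul_sum, hs.2, ht.2, one_mul]
  linarith

lemma gameVal_mem_Icc (hk : 0 < k) (hm : 0 < m)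
    (hB : ∀ i j, B i j ∈ Set.Icc (0:ℝ) 1) : gameVal B ∈ Set.Icc (0:ℝ) 1 := by
  haveI : Nonempty (stdSimplex ℝ (Fin k)) :=
    ⟨⟨_, ite_eq_mem_stdSimplex ℝ (⟨0, hk⟩ : Fin k)⟩⟩
  haveI : Nonempty (stdSimplex ℝ (Fin m)) :=
    ⟨⟨_, ite_eq_mem_stdSimplex ℝ (⟨0, hm⟩ : Fin m)⟩⟩
  obtain ⟨t₀⟩ := (inferInstance : Nonempty (stdSimplex ℝ (Fin m)))
  have hbb : ∀ s : stdSimplex ℝ (Fin k),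
      BddBelow (Set.range fun t : stdSimplex ℝ (Fin m) => ∑ i, ∑ j, s.1 i * B i j * t.1 j) := by
    intro s
    refine ⟨0, ?_⟩
    rintro _ ⟨t, rfl⟩
    exact pay_nonneg B (fun i j => (hB i j).1) s.2.1 t.2.1
  have hinner_le : ∀ s : stdSimplex ℝ (Fin k),
      (⨅ t : stdSimplex ℝ (Fin m), ∑ i, ∑ j, s.1 i * B i j * t.1 j) ≤ 1 := fun s =>
    (ciInf_le (hbb s) t₀).trans (pay_le_one B (fun i j => (hB i j).2) s.2 t₀.2)
  constructor
  · obtain ⟨s₀⟩ := (inferInstance : Nonempty (stdSimplex ℝ (Fin k)))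
    have h0 : (0:ℝ) ≤ ⨅ t : stdSimplex ℝ (Fin m), ∑ i, ∑ j, s₀.1 i * B i j * t.1 j :=
      le_ciInf fun t => pay_nonneg B (fun i j => (hB i j).1) s₀.2.1 t.2.1
    have hba : BddAbove (Set.range fun s : stdSimplex ℝ (Fin k) =>
        ⨅ t : stdSimplex ℝ (Fin m), ∑ i, ∑ j, s.1 i * B i j * t.1 j) := by
      refine ⟨1, ?_⟩
      rintro _ ⟨s, rfl⟩
      exact hinner_le s
    exact h0.trans (le_ciSup hba s₀)
  · exact ciSup_le hinner_le

lemma one_le_gameVal (hm : 0 < m) (hB0 : ∀ i j, 0 ≤ B i j) (hB1 : ∀ i j, B i j ≤ 1)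
    {s : Fin k → ℝ} (hs : s ∈ stdSimplex ℝ (Fin k))
    (hcol : ∀ j, ∑ i, s i * B i j = 1) : 1 ≤ gameVal B := by
  haveI : Nonempty (stdSimplex ℝ (Fin m)) :=
    ⟨⟨_, ite_eq_mem_stdSimplex ℝ (⟨0, hm⟩ : Fin m)⟩⟩
  obtain ⟨t₀⟩ := (inferInstance : Nonempty (stdSimplex ℝ (Fin m)))
  have hbb : ∀ s' : stdSimplex ℝ (Fin k),
      BddBelow (Set.range fun t : stdSimplex ℝ (Fin m) => ∑ i, ∑ j, s'.1 i * B i j * t.1 j) := by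
    intro s'
    refine ⟨0, ?_⟩
    rintro _ ⟨t, rfl⟩
    exact pay_nonneg B hB0 s'.2.1 t.2.1
  have hba : BddAbove (Set.range fun s' : stdSimplex ℝ (Fin k) =>
      ⨅ t : stdSimplex ℝ (Fin m), ∑ i, ∑ j, s'.1 i * B i j * t.1 j) := by
    refine ⟨1, ?_⟩
    rintro _ ⟨s', rfl⟩
    exact (ciInf_le (hbb s') t₀).trans (pay_le_one B hB1 s'.2 t₀.2)
  have hpay : ∀ t : stdSimplex ℝ (Fin m), ∑ i, ∑ j, s i * B i j * t.1 j = 1 := by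
    intro t
    rw [Finset.sum_comm]
    have : ∀ j, ∑ i, s i * B i j * t.1 j = t.1 j := by
      intro j
      rw [← Finset.sum_mul, hcol j, one_mul]
    rw [Finset.sum_congr rfl fun j _ => this j, t.2.2]
  have hval : (⨅ t : stdSimplex ℝ (Fin m),
      ∑ i, ∑ j, (⟨s, hs⟩ : stdSimplex ℝ (Fin k)).1 i * B i j * t.1 j) = 1 := by
    rw [iInf_congr fun t => hpay t]
    exact ciInf_const
  calc (1:ℝ) = _ := hval.symm
    _ ≤ gameVal B := le_ciSup hba ⟨s, hs⟩

lemma gameVal_mono (hm : 0 < m) (hB0 : ∀ i j, 0 ≤ B i j)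
    (hle : ∀ i j, B i j ≤ B' i j) (hB'1 : ∀ i j, B' i j ≤ 1) :
    gameVal B ≤ gameVal B' := by
  haveI : Nonempty (stdSimplex ℝ (Fin m)) :=
    ⟨⟨_, ite_eq_mem_stdSimplex ℝ (⟨0, hm⟩ : Fin m)⟩⟩
  obtain ⟨t₀⟩ := (inferInstance : Nonempty (stdSimplex ℝ (Fin m)))
  have hba : BddAbove (Set.range fun s : stdSimplex ℝ (Fin k) =>
      ⨅ t : stdSimplex ℝ (Fin m), ∑ i, ∑ j, s.1 i * B' i j * t.1 j) := by
    refine ⟨1, ?_⟩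
    rintro _ ⟨s, rfl⟩
    have hbb' : BddBelow (Set.range fun t : stdSimplex ℝ (Fin m) =>
        ∑ i, ∑ j, s.1 i * B' i j * t.1 j) := by
      refine ⟨0, ?_⟩
      rintro _ ⟨t, rfl⟩
      exact pay_nonneg B' (fun i j => le_trans (hB0 i j) (hle i j)) s.2.1 t.2.1
    exact (ciInf_le hbb' t₀).trans (pay_le_one B' hB'1 s.2 t₀.2)
  refine ciSup_mono hba fun s => ?_
  have hbb : BddBelow (Set.range fun t : stdSimplex ℝ (Fin m) =>
      ∑ i, ∑ j, s.1 i * B i j * t.1 j) := by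
    refine ⟨0, ?_⟩
    rintro _ ⟨t, rfl⟩
    exact pay_nonneg B hB0 s.2.1 t.2.1
  refine ciInf_mono hbb fun t => ?_
  refine Finset.sum_le_sum fun i _ => Finset.sum_le_sum fun j _ => ?_
  exact mul_le_mul_of_nonneg_right
    (mul_le_mul_of_nonneg_left (hle i j) (s.2.1 i)) (t.2.1 j)

end GameVal

lemma minimax_eval_mem_Icc (P : MinimaxPPS n) {x : Fin n → ℝ} (hx : x ∈ box01 n)
    (i : Fin n) : P.eval x i ∈ Set.Icc (0:ℝ) 1 :=
  gameVal_mem_Icc _ (P.nr_pos i) (P.nc_pos i) fun j k =>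
    ⟨probPoly_eval_nonneg _ (fun l => (hx l).1), probPoly_eval_le_one _ hx⟩

lemma minimax_eval_mono (P : MinimaxPPS n) {x y : Fin n → ℝ} (hx : x ∈ box01 n)
    (hy : y ∈ box01 n) (hxy : x ≤ y) : P.eval x ≤ P.eval y := fun i =>
  gameVal_mono _ _ (P.nc_pos i)
    (fun j k => probPoly_eval_nonneg _ (fun l => (hx l).1))
    (fun j k => probPoly_eval_mono _ (fun l => (hx l).1) hxy)
    (fun j k => probPoly_eval_le_one _ hy)

/-- Knaster–Tarski: any post-fixed point of `P.eval` in the box lies below the GFP. -/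
lemma le_gfp_of_postfixed (P : MinimaxPPS n) {g w : Fin n → ℝ}
    (hg : IsGFP P.eval g) (hw : w ∈ box01 n) (hpost : ∀ i, w i ≤ P.eval w i) :
    w ≤ g := by
  haveI : Fact ((0:ℝ) ≤ 1) := ⟨zero_le_one⟩
  have hbox : ∀ x : Fin n → Set.Icc (0:ℝ) 1, (fun j => (x j : ℝ)) ∈ box01 n :=
    fun x j => ⟨(x j).2.1, (x j).2.2⟩
  let F : (Fin n → Set.Icc (0:ℝ) 1) →o (Fin n → Set.Icc (0:ℝ) 1) :=
    ⟨fun x i => ⟨P.eval (fun j => (x j : ℝ)) i, minimax_eval_mem_Icc P (hbox x) i⟩,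
     fun x y hxy i => minimax_eval_mono P (hbox x) (hbox y)
       (fun j => Subtype.coe_le_coe.2 (hxy j)) i⟩
  have hfix : F F.gfp = F.gfp := F.isFixedPt_gfp
  have hvle : (fun j => ((F.gfp j : Set.Icc (0:ℝ) 1) : ℝ)) ≤ g := by
    refine hg.2.2 _ (hbox F.gfp) ?_
    funext i
    exact congrArg Subtype.val (congrFun hfix i)
  have hwv : (fun i => (⟨w i, hw i⟩ : Set.Icc (0:ℝ) 1)) ≤ F.gfp :=
    F.le_gfp fun i => Subtype.mk_le_mk.2 (hpost i)
  exact fun i => le_trans (hwv i) (hvle i)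

end Helpers

/-- For a minimax-PPS whose greatest fixed point `g*` satisfies
`g* < 1` in every coordinate, there exists a mixed LDF policy `τ` for the min
player such that `g*_{*,τ} < 1` in every coordinate. -/
theorem minimaxPPS_exists_LDF_policy {n : ℕ} (P : MinimaxPPS n)
    (g : Fin n → ℝ) (hg : IsGFP P.eval g) (hlt : ∀ i, g i < 1) :
    ∃ τ : (i : Fin n) → Fin (P.nc i) → ℝ, (∀ i, IsDist (τ i)) ∧
      P.IsLDFPolicy τ ∧
      (∀ gτ, IsGFP (P.fixMin τ) gτ → ∀ i, gτ i < 1) := by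
  classical
  have hgbox := hg.1
  -- The key auxiliary fact: any set `S` of coordinates on which the max player can
  -- guarantee (against everything) value-1 mass-1 subsystems supported in `S` must be empty.
  have key : ∀ S : Set (Fin n),
      (∀ i ∈ S, ∃ s : Fin (P.nr i) → ℝ, s ∈ stdSimplex ℝ (Fin (P.nr i)) ∧
        ∀ a k, s a ≠ 0 → ((∑ r, (P.q i a k).p r) = 1 ∧
          ∀ r, (P.q i a k).p r ≠ 0 → ∀ l, (P.q i a k).expo r l ≠ 0 → l ∈ S)) →
      S = ∅ := by
    intro S hS
    by_contra hne
    obtain ⟨i0, hi0⟩ := Set.nonempty_iff_ne_empty.2 hne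
    set w : Fin n → ℝ := fun i' => if i' ∈ S then 1 else g i' with hwdef
    have hwS : ∀ l ∈ S, w l = 1 := fun l hl => if_pos hl
    have hwbox : w ∈ box01 n := by
      intro i'
      by_cases h : i' ∈ S
      · simp [hwdef, h]
      · simpa [hwdef, h] using hgbox i'
    have hgw : g ≤ w := by
      intro i'
      by_cases h : i' ∈ S
      · simpa [hwdef, h] using (hgbox i').2
      · simp [hwdef, h]
    have hpost : ∀ i', w i' ≤ P.eval w i' := by
      intro i'
      by_cases h : i' ∈ S
      · obtain ⟨s, hs, hprop⟩ := hS i' h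
        have hcol : ∀ k, ∑ a, s a * (P.q i' a k).eval w = 1 := by
          intro k
          have hterm : ∀ a ∈ Finset.univ, s a * (P.q i' a k).eval w = s a := by
            intro a _
            by_cases ha : s a = 0
            · simp [ha]
            · rw [probPoly_eval_eq_one _ ((hprop a k ha).1)
                (fun r hr l hl => hwS l ((hprop a k ha).2 r hr l hl)), mul_one]
          rw [Finset.sum_congr rfl hterm, hs.2]
        have h1 : (1:ℝ) ≤ gameVal (P.A i' w) :=
          one_le_gameVal _ (P.nc_pos i')
            (fun a k => probPoly_eval_nonneg _ fun l => (hwbox l).1)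
            (fun a k => probPoly_eval_le_one _ hwbox) hs hcol
        calc w i' = 1 := hwS i' h
          _ ≤ P.eval w i' := h1
      · calc w i' = g i' := if_neg h
          _ = P.eval g i' := (congrFun hg.2.1 i').symm
          _ ≤ P.eval w i' := minimax_eval_mono P hgbox hwbox hgw i'
    have hle := le_gfp_of_postfixed P hg hwbox hpost
    have hone : (1:ℝ) ≤ g i0 := by
      have := hle i0
      rwa [hwS i0 hi0] at this
    exact absurd hone (not_le.2 (hlt i0))
  -- the uniform policy
  set τ : (i : Fin n) → Fin (P.nc i) → ℝ := fun i _ => (P.nc i : ℝ)⁻¹ with hτdef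
  have hncne : ∀ i, ((P.nc i : ℝ)) ≠ 0 := fun i => Nat.cast_ne_zero.2 (P.nc_pos i).ne'
  have hτ1 : ∀ i, ∑ k : Fin (P.nc i), τ i k = 1 := by
    intro i
    rw [Finset.sum_const, Finset.card_univ, Fintype.card_fin, nsmul_eq_mul]
    exact mul_inv_cancel₀ (hncne i)
  have hτd : ∀ i, IsDist (τ i) :=
    fun i => ⟨fun k => inv_nonneg.2 (Nat.cast_nonneg _), hτ1 i⟩
  have hτne : ∀ i k, τ i k ≠ 0 := fun i k => inv_ne_zero (hncne i)
  refine ⟨τ, hτd, ?_, ?_⟩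
  · -- LDF policy
    intro σ hσ hbot
    obtain ⟨S, hSne, -, hclosed, hld⟩ := hbot
    have hempty : S = ∅ := by
      apply key S
      intro i hi
      refine ⟨σ i, ⟨(hσ i).1, (hσ i).2⟩, ?_⟩
      intro a k ha
      have hmass := dist_double_sum_eq_one (σ i) (τ i) (fun a b => ∑ r, (P.q i a b).p r)
        (hσ i).1 (fun b => (hτd i).1 b) (fun a b => (P.q i a b).p_sum_le_one) (hσ i).2 (hτ1 i)
        (hld i hi).2 a k ha (hτne i k)
      exact ⟨hmass, fun r hr l hl => hclosed i hi l ⟨a, k, r, ha, hτne i k, hr, hl⟩⟩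
    exact absurd hempty (Set.nonempty_iff_ne_empty.1 hSne)
  · -- the GFP of the fixed-min system is < 1 everywhere
    intro gτ hgτ i
    by_contra hnot
    have hgτbox := hgτ.1
    have hone : gτ i = 1 := le_antisymm (hgτbox i).2 (not_lt.1 hnot)
    set T : Set (Fin n) := {i' | gτ i' = 1} with hTdef
    have hiT : i ∈ T := hone
    have hempty : T = ∅ := by
      apply key T
      intro i' hi'
      haveI : Nonempty (Fin (P.nr i')) := Fin.pos_iff_nonempty.1 (P.nr_pos i')
      obtain ⟨j, hj⟩ := Finite.exists_max
        (fun j : Fin (P.nr i') => ∑ k, τ i' k * (P.q i' j k).eval gτ)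
      have hfp : P.fixMin τ gτ i' = gτ i' := congrFun hgτ.2.1 i'
      have hsup : P.fixMin τ gτ i' = ∑ k, τ i' k * (P.q i' j k).eval gτ := by
        show (⨆ j : Fin (P.nr i'), ∑ k, τ i' k * (P.q i' j k).eval gτ)
            = ∑ k, τ i' k * (P.q i' j k).eval gτ
        exact le_antisymm (ciSup_le hj)
          (le_ciSup (Set.Finite.bddAbove (Set.finite_range
            (fun j : Fin (P.nr i') => ∑ k, τ i' k * (P.q i' j k).eval gτ))) j)
      have hj1 : ∑ k, τ i' k * (P.q i' j k).eval gτ = 1 := by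
        rw [← hsup, hfp]; exact hi'
      have hq1 : ∀ k, (P.q i' j k).eval gτ = 1 := fun k =>
        dist_sum_eq_one (τ i') (fun k => (P.q i' j k).eval gτ) (fun k => (hτd i').1 k)
          (fun k => probPoly_eval_le_one _ hgτbox) (hτ1 i') hj1 k (hτne i' k)
      refine ⟨fun a => if j = a then 1 else 0, ite_eq_mem_stdSimplex ℝ j, ?_⟩
      intro a k ha
      rcases eq_or_ne j a with h | h
      · subst h
        have hc := probPoly_eval_eq_one_inv (P.q i' j k) hgτbox (hq1 k)
        exact ⟨hc.1, fun r hr l hl => (hc.2 r hr l hl : gτ l = 1)⟩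
      · simp [h] at ha
    rw [hempty] at hiT
    exact hiT
end
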